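/- arXiv:2601.21054 — 5 statements merged into one kernel-verified Lean document; each statement's English description precedes it below -/
import Mathlib

section
/- Sup-norm growth bound for the grid system (Lemma 3.2(a)): Suppose sup_{1 ≤ i ≤ 2d} sup_{x ∈ S_ε} |q_i(x)| ≤ C₁ for some C₁ > 0, that ρ_i(x) ≥ 0 for all 1 ≤ i ≤ 2d and x ∈ S_ε, and that sup_{x ∈ S_ε} |Σ_{i=1}^{2d} r_i(x) − Σ_{i=1}^{2d} ρ_i(x)| ≤ C₂ for some C₂ > 0. If (u, Λ) is a solution of the grid system with initial datum u₀, then for every t ≥ 0, sup_{x ∈ S_ε} u(x,t) ≤ e^{(1+C₂)t} sup_{x ∈ S_ε} u₀(x). -/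
open MeasureTheory Set

noncomputable section

abbrev Euc (d : ℕ) := EuclideanSpace ℝ (Fin d)

/-- Index set for the `2d` lattice directions: `(i, false)` stands for `+eᵢ`
and `(i, true)` for `−eᵢ`. -/
abbrev GI (d : ℕ) := Fin d × Bool

/-- Lattice coordinates for the grid `S_ε = (εℤ)^d`. -/
abbrev GZ (d : ℕ) := Fin d → ℤ

/-- The point of `S_ε ⊆ ℝ^d` with lattice coordinates `ζ`. -/
noncomputable def gridPt {d : ℕ} (ε : ℝ) (ζ : GZ d) : Euc d :=
  (EuclideanSpace.equiv (Fin d) ℝ).symm (fun i => ε * (ζ i : ℝ))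

/-- The direction vector `k_i ∈ ℝ^d`. -/
noncomputable def kvec {d : ℕ} (i : GI d) : Euc d :=
  (if i.2 then (-1 : ℝ) else 1) • (EuclideanSpace.single i.1 1 : Euc d)

/-- The conjugate index `i*` (opposite direction). -/
def gstar {d : ℕ} (i : GI d) : GI d := (i.1, !i.2)

/-- Lattice translation by `k_i`: `x ↦ x + ε k_i` in lattice coordinates. -/
def gstep {d : ℕ} (i : GI d) (ζ : GZ d) : GZ d :=
  Function.update ζ i.1 (ζ i.1 + (if i.2 then -1 else 1))

/-- The jump rate `r_i(x) = ε⁻² + ε⁻¹ q_i(x)`. -/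
noncomputable def grate {d : ℕ} (ε : ℝ) (q : GI d → GZ d → ℝ) (i : GI d) (ζ : GZ d) : ℝ :=
  ε⁻¹ * ε⁻¹ + ε⁻¹ * q i ζ

/-- The reversed rate `ρ_i(x) = r_{i*}(x + ε k_i)`. -/
noncomputable def grho {d : ℕ} (ε : ℝ) (q : GI d → GZ d → ℝ) (i : GI d) (ζ : GZ d) : ℝ :=
  grate ε q (gstar i) (gstep i ζ)

/-- The formal adjoint `L*_ε f(x) = Σᵢ [rᵢ(x−εkᵢ) f(x−εkᵢ) − rᵢ(x) f(x)]`. -/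
noncomputable def gLstar {d : ℕ} (ε : ℝ) (q : GI d → GZ d → ℝ) (f : GZ d → ℝ) (ζ : GZ d) : ℝ :=
  ∑ i : GI d,
    (grate ε q i (gstep (gstar i) ζ) * f (gstep (gstar i) ζ) - grate ε q i ζ * f ζ)

/-- A solution `(u, Λ)` of the grid system with rates built from `q` and initial datum `u₀`. -/
structure IsGridSolution {d : ℕ} (ε : ℝ) (q : GI d → GZ d → ℝ)
    (u₀ : GZ d → ℝ) (u : GZ d → ℝ → ℝ) (Λ : GZ d → ℝ → ℝ) : Prop where
  u_nonneg : ∀ ζ t, 0 ≤ t → 0 ≤ u ζ t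
  u_cont : ∀ ζ, ContinuousOn (u ζ) (Ici 0)
  u_mass : ∀ t : ℝ, 0 ≤ t → HasSum (fun ζ => u ζ t) 1
  lam_meas : ∀ ζ, Measurable (Λ ζ)
  lam_nonneg : ∀ ζ t, 0 ≤ t → 0 ≤ Λ ζ t
  lam_mass : ∀ᵐ t ∂(volume.restrict (Ici (0:ℝ))), HasSum (fun ζ => Λ ζ t) 1
  ode : ∀ ζ, ∀ t : ℝ, 0 ≤ t →
    u ζ t = u₀ ζ + ∫ s in (0:ℝ)..t, (gLstar ε q (fun ξ => u ξ s) ζ + u ζ s - Λ ζ s)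
  argmax : ∑' ζ : GZ d, ∫⁻ t in Ici (0:ℝ),
      ENNReal.ofReal (((⨆ ξ, u ξ t) - u ζ t) * Λ ζ t) = 0

/-!
Write `F = L*_ε u + u - Λ`. Since `ρᵢ ≥ 0` and `∑ ρᵢ ≤ ∑ rᵢ + C₂`, at any time at which all
`u ξ ≤ m` one has `F ζ ≤ (κ + 1 + C₂) m - κ u ζ` for every uniform bound `κ ≥ ∑ rᵢ - 1`: the
large rates only pull `u ζ` towards the current maximum, and the growth rate is `1 + C₂`.
Comparing each `u ζ` with `(M₀ + δ) e^{(1+C₂)s} - δ e^{-κ s}` keeps it below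
`(M₀ + δ) e^{(1+C₂)s}` with a margin `δ e^{-κ s}` that is uniform in `ζ`; as the `u ζ` rise at
a uniformly bounded rate, the bound propagates in time steps of fixed length. Then `δ → 0`.
-/

lemma nonneg_of_eq_integral_of_add_mul_nonneg {z g : ℝ → ℝ} {κ T : ℝ} (hκ : 0 ≤ κ)
    (hT : 0 ≤ T) (hg : IntegrableOn g (Icc 0 T))
    (hz : ∀ t ∈ Icc 0 T, z t = z 0 + ∫ s in (0:ℝ)..t, g s)
    (hgz : ∀ s ∈ Icc 0 T, 0 ≤ g s + κ * z s) (h0 : 0 ≤ z 0) : 0 ≤ z T := by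
  by_contra! hzT
  have hzc : ContinuousOn z (Icc 0 T) := by
    rw [← uIcc_of_le hT] at hg hz ⊢
    exact (continuousOn_const.add (intervalIntegral.continuousOn_primitive_interval hg)).congr hz
  set A := Icc 0 T ∩ z ⁻¹' Ici 0
  have hAbdd : BddAbove A := ⟨T, fun s hs => hs.1.2⟩
  obtain ⟨⟨ht₀, htT⟩, hzt⟩ : sSup A ∈ A :=
    (hzc.preimage_isClosed_of_isClosed isClosed_Icc isClosed_Ici).csSup_mem
      ⟨0, ⟨le_rfl, hT⟩, h0⟩ hAbdd
  have hz_neg : ∀ s ∈ Ioc (sSup A) T, z s < 0 := fun s hs => by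
    by_contra! h
    exact (le_csSup hAbdd ⟨⟨ht₀.trans hs.1.le, hs.2⟩, h⟩).not_gt hs.1
  have hg_int : ∀ t ∈ Icc 0 T, IntervalIntegrable g volume 0 t := fun t ht =>
    (hg.mono_set (by rw [uIcc_of_le ht.1]; exact Icc_subset_Icc le_rfl ht.2)).intervalIntegrable
  have hincr : z T - z (sSup A) = ∫ s in (sSup A)..T, g s := by
    rw [hz T ⟨hT, le_rfl⟩, hz _ ⟨ht₀, htT⟩, add_sub_add_left_eq_sub,
      intervalIntegral.integral_interval_sub_left (hg_int T ⟨hT, le_rfl⟩) (hg_int _ ⟨ht₀, htT⟩)]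
  -- after its last zero `z` is negative, so `g ≥ -κ z ≥ 0` there and `z` cannot decrease
  have : 0 ≤ ∫ s in (sSup A)..T, g s := by
    rw [intervalIntegral.integral_of_le htT]
    refine setIntegral_nonneg measurableSet_Ioc fun s hs => ?_
    nlinarith [hgz s ⟨ht₀.trans hs.1.le, hs.2⟩, hz_neg s hs]
  linarith [show 0 ≤ z (sSup A) from hzt]

lemma MeasureTheory.LocallyIntegrableOn.intervalIntegrable_of_nonneg {f : ℝ → ℝ}
    (hf : LocallyIntegrableOn f (Ici 0)) {a b : ℝ} (ha : 0 ≤ a) (hb : 0 ≤ b) :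
    IntervalIntegrable f volume a b :=
  (hf.integrableOn_compact_subset (fun _ hx => le_trans (le_inf ha hb) hx.1)
    isCompact_uIcc).intervalIntegrable

lemma le_add_mul_sub_of_eq_integral {v f : ℝ → ℝ} {L : ℝ} (hf : LocallyIntegrableOn f (Ici 0))
    (hv : ∀ t, 0 ≤ t → v t = v 0 + ∫ s in (0:ℝ)..t, f s) (hfL : ∀ s, 0 ≤ s → f s ≤ L)
    {t s : ℝ} (ht : 0 ≤ t) (hts : t ≤ s) : v s ≤ v t + L * (s - t) := by
  have hs : 0 ≤ s := ht.trans hts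
  have hincr : v s - v t = ∫ r in t..s, f r := by
    rw [hv s hs, hv t ht, add_sub_add_left_eq_sub, intervalIntegral.integral_interval_sub_left
      (hf.intervalIntegrable_of_nonneg le_rfl hs) (hf.intervalIntegrable_of_nonneg le_rfl ht)]
  have hle : ∫ r in t..s, f r ≤ ∫ _ in t..s, L :=
    intervalIntegral.integral_mono_on hts (hf.intervalIntegrable_of_nonneg ht hs)
      intervalIntegrable_const fun r hr => hfL r (ht.trans hr.1)
  rw [intervalIntegral.integral_const, smul_eq_mul] at hle
  linarith

lemma forall_Icc_of_forall_step {P : ℝ → Prop} {η T : ℝ} (hη : 0 < η) (h0 : P 0)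
    (hstep : ∀ t ∈ Icc 0 T, (∀ s ∈ Icc 0 t, P s) → ∀ s ∈ Icc t (t + η), s ≤ T → P s) :
    ∀ s ∈ Icc 0 T, P s := by
  have key : ∀ n : ℕ, ∀ s ∈ Icc 0 T, s ≤ n * η → P s := by
    intro n
    induction n with
    | zero =>
      intro s hs hsn
      rwa [le_antisymm (by simpa using hsn) hs.1]
    | succ n ih =>
      intro s hs hsn
      by_cases hsn' : s ≤ n * η
      · exact ih s hs hsn'
      · rw [not_le] at hsn'
        have hn : (n : ℝ) * η ∈ Icc 0 T := ⟨by positivity, hsn'.le.trans hs.2⟩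
        exact hstep _ hn (fun r hr => ih r ⟨hr.1, hr.2.trans hn.2⟩ hr.2)
          s ⟨hsn'.le, by push_cast at hsn; linarith⟩ hs.2
  intro s hs
  obtain ⟨n, hn⟩ := exists_nat_ge (s / η)
  exact key n s hs ((div_le_iff₀ hη).1 hn)

section MaximumPrinciple

variable {ι : Type*} {u F : ι → ℝ → ℝ} {κ ω L M₀ : ℝ}

/-- Comparison with `y s = (M₀ + δ) e^{ω s} - δ e^{-κ s}`, which solves
`y' = (κ + ω) (M₀ + δ) e^{ω s} - κ y` with `y 0 = M₀`. -/
lemma le_sub_exp_of_forall_le (hκ : 0 ≤ κ) (hF : ∀ i, LocallyIntegrableOn (F i) (Ici 0))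
    (hode : ∀ i t, 0 ≤ t → u i t = u i 0 + ∫ s in (0:ℝ)..t, F i s)
    (hF_max : ∀ i s m, 0 ≤ s → (∀ j, u j s ≤ m) → F i s ≤ (κ + ω) * m - κ * u i s)
    (h0 : ∀ i, u i 0 ≤ M₀) {δ t : ℝ} (ht : 0 ≤ t)
    (hle : ∀ s ∈ Icc 0 t, ∀ j, u j s ≤ (M₀ + δ) * Real.exp (ω * s)) (i : ι) :
    u i t ≤ (M₀ + δ) * Real.exp (ω * t) - δ * Real.exp (-κ * t) := by
  set y : ℝ → ℝ := fun s => (M₀ + δ) * Real.exp (ω * s) - δ * Real.exp (-κ * s)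
  set y' : ℝ → ℝ := fun s => (κ + ω) * ((M₀ + δ) * Real.exp (ω * s)) - κ * y s
  have hy : ∀ s, HasDerivAt y (y' s) s := fun s => by
    have := (((hasDerivAt_id s).const_mul ω).exp.const_mul (M₀ + δ)).sub
      (((hasDerivAt_id s).const_mul (-κ)).exp.const_mul δ)
    refine this.congr_deriv ?_
    simp only [y', y, id]
    ring
  have hy' : Continuous y' := by fun_prop
  have hcomp := nonneg_of_eq_integral_of_add_mul_nonneg (z := fun s => y s - u i s)
    (g := fun s => y' s - F i s) hκ ht
    (hy'.integrableOn_Icc.sub ((hF i).integrableOn_compact_subset Icc_subset_Ici_self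
      isCompact_Icc))
    (fun s hs => by
      rw [intervalIntegral.integral_sub (hy'.intervalIntegrable _ _)
        ((hF i).intervalIntegrable_of_nonneg le_rfl hs.1),
        intervalIntegral.integral_eq_sub_of_hasDerivAt (fun x _ => hy x)
        (hy'.intervalIntegrable _ _), hode i s hs.1]
      ring)
    (fun s hs => by
      have := hF_max i s _ hs.1 (hle s hs)
      simp only [y']
      linarith)
    (by simpa [y] using h0 i)
  simp only [y] at hcomp
  linarith

theorem le_mul_exp_of_eq_integral (hκ : 0 ≤ κ) (hω : 0 ≤ ω)
    (hF : ∀ i, LocallyIntegrableOn (F i) (Ici 0))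
    (hode : ∀ i t, 0 ≤ t → u i t = u i 0 + ∫ s in (0:ℝ)..t, F i s)
    (hF_le : ∀ i s, 0 ≤ s → F i s ≤ L)
    (hF_max : ∀ i s m, 0 ≤ s → (∀ j, u j s ≤ m) → F i s ≤ (κ + ω) * m - κ * u i s)
    (hM₀ : 0 ≤ M₀) (h0 : ∀ i, u i 0 ≤ M₀) (i : ι) {t : ℝ} (ht : 0 ≤ t) :
    u i t ≤ M₀ * Real.exp (ω * t) := by
  refine le_of_forall_pos_le_add fun ε hε => ?_
  set δ := ε / Real.exp (ω * t)
  have hδ : 0 < δ := by positivity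
  -- `δ e^{-κ t}` is the gap left by the comparison lemma on all of `[0, t]`, and within a time
  -- step `η` the `u i` cannot rise by more than that
  set η := δ * Real.exp (-κ * t) / (|L| + 1)
  have hη : 0 < η := by positivity
  have hLη : |L| * η ≤ δ * Real.exp (-κ * t) := by
    rw [mul_div_assoc', div_le_iff₀ (by positivity)]
    nlinarith [Real.exp_pos (-κ * t)]
  have hbound : ∀ s ∈ Icc 0 t, ∀ j, u j s ≤ (M₀ + δ) * Real.exp (ω * s) := by
    refine forall_Icc_of_forall_step hη (fun j => ?_) fun r hr hle s hs hst j => ?_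
    · simpa using (h0 j).trans (le_add_of_nonneg_right hδ.le)
    have hcomp := le_sub_exp_of_forall_le hκ hF hode hF_max h0 hr.1 hle j
    have hrise := le_add_mul_sub_of_eq_integral (hF j) (hode j) (hF_le j) hr.1 hs.1
    have hgap : δ * Real.exp (-κ * t) ≤ δ * Real.exp (-κ * r) :=
      mul_le_mul_of_nonneg_left (Real.exp_le_exp.2 (by nlinarith [hr.2])) hδ.le
    have hstep : L * (s - r) ≤ |L| * η :=
      (mul_le_mul_of_nonneg_right (le_abs_self L) (by linarith [hs.1])).trans
        (mul_le_mul_of_nonneg_left (by linarith [hs.2]) (abs_nonneg L))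
    have hmono : (M₀ + δ) * Real.exp (ω * r) ≤ (M₀ + δ) * Real.exp (ω * s) :=
      mul_le_mul_of_nonneg_left (Real.exp_le_exp.2 (by nlinarith [hs.1])) (by linarith)
    linarith
  calc u i t ≤ (M₀ + δ) * Real.exp (ω * t) := hbound t ⟨ht, le_rfl⟩ i
    _ = M₀ * Real.exp (ω * t) + ε := by simp only [δ]; field_simp

end MaximumPrinciple

section Grid

variable {d : ℕ} {ε : ℝ} {q : GI d → GZ d → ℝ}

lemma gstar_gstar (i : GI d) : gstar (gstar i) = i := by
  simp [gstar]

lemma gLstar_eq (f : GZ d → ℝ) (ζ : GZ d) :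
    gLstar ε q f ζ =
      ∑ i : GI d, grho ε q i ζ * f (gstep i ζ) - (∑ i : GI d, grate ε q i ζ) * f ζ := by
  rw [gLstar, Finset.sum_sub_distrib, Finset.sum_mul]
  congr 1
  exact Fintype.sum_bijective gstar (Function.Involutive.bijective gstar_gstar) _ _ fun i => by
    simp [grho, gstar_gstar]

lemma sum_grate_le {C₁ : ℝ} (hε : 0 < ε) {ζ : GZ d} (hq : ∀ i, q i ζ ≤ C₁) :
    ∑ i : GI d, grate ε q i ζ ≤ Fintype.card (GI d) * (ε⁻¹ * ε⁻¹ + ε⁻¹ * C₁) := by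
  have := Finset.sum_le_card_nsmul Finset.univ (fun i => grate ε q i ζ) _ fun i _ =>
    add_le_add_right (mul_le_mul_of_nonneg_left (hq i) (inv_nonneg.2 hε.le)) (ε⁻¹ * ε⁻¹)
  simpa only [Finset.card_univ, nsmul_eq_mul] using this

lemma gLstar_add_le {f : GZ d → ℝ} {ζ : GZ d} {κ C₂ m : ℝ} (hρ : ∀ i, 0 ≤ grho ε q i ζ)
    (hC₂ : ∑ i : GI d, grho ε q i ζ ≤ ∑ i : GI d, grate ε q i ζ + C₂)
    (hκ : ∑ i : GI d, grate ε q i ζ ≤ κ + 1) (hf : ∀ ξ, f ξ ≤ m) (hfζ : 0 ≤ f ζ) :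
    gLstar ε q f ζ + f ζ ≤ (κ + (1 + C₂)) * m - κ * f ζ := by
  have hneighbours :
      ∑ i : GI d, grho ε q i ζ * f (gstep i ζ) ≤ (∑ i : GI d, grho ε q i ζ) * m := by
    rw [Finset.sum_mul]
    exact Finset.sum_le_sum fun i _ => mul_le_mul_of_nonneg_left (hf _) (hρ i)
  rw [gLstar_eq]
  nlinarith [mul_le_mul_of_nonneg_right hC₂ (hfζ.trans (hf ζ)),
    mul_nonneg (sub_nonneg.2 hκ) (sub_nonneg.2 (hf ζ))]

end Grid

namespace IsGridSolution

variable {d : ℕ} {ε : ℝ} {q : GI d → GZ d → ℝ} {u₀ : GZ d → ℝ} {u Λ : GZ d → ℝ → ℝ}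

lemma u_le_one (hsol : IsGridSolution ε q u₀ u Λ) (ζ : GZ d) {t : ℝ} (ht : 0 ≤ t) :
    u ζ t ≤ 1 :=
  le_hasSum (hsol.u_mass t ht) ζ fun ξ _ => hsol.u_nonneg ξ t ht

lemma u_zero (hsol : IsGridSolution ε q u₀ u Λ) (ζ : GZ d) : u ζ 0 = u₀ ζ := by
  simpa using hsol.ode ζ 0 le_rfl

lemma locallyIntegrableOn_lam (hsol : IsGridSolution ε q u₀ u Λ) (ζ : GZ d) :
    LocallyIntegrableOn (Λ ζ) (Ici 0) := by
  have hbdd : ∀ᵐ t ∂volume.restrict (Ici (0:ℝ)), ‖Λ ζ t‖ ≤ 1 := by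
    filter_upwards [hsol.lam_mass, ae_restrict_mem measurableSet_Ici] with t ht ht₀
    rw [Real.norm_of_nonneg (hsol.lam_nonneg ζ t ht₀)]
    exact le_hasSum ht ζ fun ξ _ => hsol.lam_nonneg ξ t ht₀
  rw [locallyIntegrableOn_iff isClosed_Ici.isLocallyClosed]
  exact fun k hk hkc => Measure.integrableOn_of_bounded hkc.measure_lt_top.ne
    (hsol.lam_meas ζ).aestronglyMeasurable (ae_restrict_of_ae_restrict_of_subset hk hbdd)

lemma locallyIntegrableOn_rhs (hsol : IsGridSolution ε q u₀ u Λ) (ζ : GZ d) :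
    LocallyIntegrableOn (fun s => gLstar ε q (fun ξ => u ξ s) ζ + u ζ s - Λ ζ s) (Ici 0) := by
  have hcont : ContinuousOn (fun s => gLstar ε q (fun ξ => u ξ s) ζ + u ζ s) (Ici 0) :=
    (continuousOn_finsetSum _ fun i _ => (continuousOn_const.mul (hsol.u_cont _)).sub
      (continuousOn_const.mul (hsol.u_cont ζ))).add (hsol.u_cont ζ)
  exact (hcont.locallyIntegrableOn measurableSet_Ici).sub (hsol.locallyIntegrableOn_lam ζ)

end IsGridSolution

theorem stmt9_general (d : ℕ) (ε : ℝ) (hε : ε ∈ Ioo (0:ℝ) 1)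
    (C₁ : ℝ) (hC₁ : 0 < C₁) (q : GI d → GZ d → ℝ)
    (hq : ∀ i : GI d, ∀ ζ : GZ d, |q i ζ| ≤ C₁)
    (hρ : ∀ i : GI d, ∀ ζ : GZ d, 0 ≤ grho ε q i ζ)
    (C₂ : ℝ) (hC₂pos : 0 < C₂)
    (hC₂ : ∀ ζ : GZ d, |∑ i : GI d, grate ε q i ζ - ∑ i : GI d, grho ε q i ζ| ≤ C₂)
    (u₀ : GZ d → ℝ) (hu₀ : ∀ ζ, 0 ≤ u₀ ζ) (hmass : HasSum u₀ 1)
    (u : GZ d → ℝ → ℝ) (Λ : GZ d → ℝ → ℝ) (hsol : IsGridSolution ε q u₀ u Λ) :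
    ∀ t : ℝ, 0 ≤ t → (⨆ ζ : GZ d, u ζ t) ≤ Real.exp ((1 + C₂) * t) * ⨆ ζ : GZ d, u₀ ζ := by
  intro t ht
  set κ := (Fintype.card (GI d) : ℝ) * (ε⁻¹ * ε⁻¹ + ε⁻¹ * C₁)
  have hκ : 0 ≤ κ := by have := hε.1; positivity
  have hF_max : ∀ ζ s m, 0 ≤ s → (∀ ξ, u ξ s ≤ m) →
      gLstar ε q (fun ξ => u ξ s) ζ + u ζ s - Λ ζ s ≤ (κ + (1 + C₂)) * m - κ * u ζ s :=
    fun ζ s m hs hm => by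
      have := gLstar_add_le (κ := κ) (C₂ := C₂) (hρ · ζ) (by linarith [(abs_le.1 (hC₂ ζ)).1])
        (by linarith [sum_grate_le hε.1 fun i => (le_abs_self _).trans (hq i ζ)]) hm
        (hsol.u_nonneg ζ s hs)
      linarith [hsol.lam_nonneg ζ s hs]
  have hu₀_bdd : BddAbove (range u₀) :=
    ⟨1, forall_mem_range.2 fun ζ => le_hasSum hmass ζ fun ξ _ => hu₀ ξ⟩
  refine ciSup_le fun ζ => ?_
  rw [mul_comm]
  exact le_mul_exp_of_eq_integral (L := κ + (1 + C₂)) hκ (by linarith) hsol.locallyIntegrableOn_rhs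
    (fun ζ t ht => hsol.u_zero ζ ▸ hsol.ode ζ t ht)
    (fun ζ s hs => by
      linarith [hF_max ζ s 1 hs fun ξ => hsol.u_le_one ξ hs,
        mul_nonneg hκ (hsol.u_nonneg ζ s hs)])
    hF_max (Real.iSup_nonneg hu₀) (fun ζ => hsol.u_zero ζ ▸ le_ciSup hu₀_bdd ζ) ζ ht

/-- Lemma 3.2(a): sup-norm growth bound for the grid system. -/
theorem stmt9 (d : ℕ) (hd : 1 ≤ d) (ε : ℝ) (hε : ε ∈ Ioo (0:ℝ) 1)
    (C₁ : ℝ) (hC₁ : 0 < C₁) (q : GI d → GZ d → ℝ)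
    (hq : ∀ i : GI d, ∀ ζ : GZ d, |q i ζ| ≤ C₁)
    (hρ : ∀ i : GI d, ∀ ζ : GZ d, 0 ≤ grho ε q i ζ)
    (C₂ : ℝ) (hC₂pos : 0 < C₂)
    (hC₂ : ∀ ζ : GZ d, |∑ i : GI d, grate ε q i ζ - ∑ i : GI d, grho ε q i ζ| ≤ C₂)
    (u₀ : GZ d → ℝ) (hu₀ : ∀ ζ, 0 ≤ u₀ ζ) (hmass : HasSum u₀ 1)
    (u : GZ d → ℝ → ℝ) (Λ : GZ d → ℝ → ℝ) (hsol : IsGridSolution ε q u₀ u Λ) :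
    ∀ t : ℝ, 0 ≤ t → (⨆ ζ : GZ d, u ζ t) ≤ Real.exp ((1 + C₂) * t) * ⨆ ζ : GZ d, u₀ ζ :=
  stmt9_general d ε hε C₁ hC₁ q hq hρ C₂ hC₂pos hC₂ u₀ hu₀ hmass u Λ hsol
end
end

section
/- Example 1.1, weak stationarity: For every φ ∈ C_c^∞(ℝ), ∫_ℝ (φ''(x) − 2 tanh(x) φ'(x) + φ(x)) u(x) dx = ∫_{−w}^{w} φ(x) · h(1 + 2/cosh²(x)) dx, and moreover ∫_{−w}^{w} h(1 + 2/cosh²(x)) dx = 1. In other words, u together with the removal measure with density h(1 + 2 sech²x) on [−w,w] is a stationary weak solution of ∂_t u = u'' + (2 tanh(x) u)' + u − β, and this removal measure is a probability measure. -/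
open MeasureTheory Set

noncomputable section

/-- `w = log(1 + √2)`. -/
noncomputable def exW : ℝ := Real.log (1 + Real.sqrt 2)

/-- `h = 1/(2(w + √2))`. -/
noncomputable def exH : ℝ := 1 / (2 * (exW + Real.sqrt 2))

/-- The flat-top stationary profile of Example 1.1. -/
noncomputable def exU (x : ℝ) : ℝ :=
  if |x| ≤ exW then exH else 2 * exH * Real.sinh |x| / (Real.cosh |x|) ^ 2

/- ---------- auxiliary lemmas ---------- -/

lemma sqrt2_sq : Real.sqrt 2 ^ 2 = 2 := Real.sq_sqrt (by norm_num)
lemma sqrt2_pos : (0:ℝ) < Real.sqrt 2 := Real.sqrt_pos.mpr (by norm_num)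
lemma exW_pos : 0 < exW := Real.log_pos (by nlinarith [sqrt2_pos])
lemma sinh_exW : Real.sinh exW = 1 := by
  rw [exW, Real.sinh_log (by positivity)]
  have h := sqrt2_sq
  have hne : (1 + Real.sqrt 2) ≠ 0 := by positivity
  field_simp
  nlinarith
lemma cosh_exW : Real.cosh exW = Real.sqrt 2 := by
  rw [exW, Real.cosh_log (by positivity)]
  have h := sqrt2_sq
  have hne : (1 + Real.sqrt 2) ≠ 0 := by positivity
  field_simp
  nlinarith
lemma tanh_exW : Real.tanh exW = 1 / Real.sqrt 2 := by
  rw [Real.tanh_eq_sinh_div_cosh, sinh_exW, cosh_exW]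

lemma continuous_tanh' : Continuous Real.tanh := by
  have h : Real.tanh = fun x => Real.sinh x / Real.cosh x :=
    funext fun x => Real.tanh_eq_sinh_div_cosh x
  rw [h]
  exact Real.continuous_sinh.div Real.continuous_cosh fun x => (Real.cosh_pos x).ne'

lemma hasDerivAt_tanh (x : ℝ) : HasDerivAt Real.tanh (1 / Real.cosh x ^ 2) x := by
  have h : HasDerivAt (fun y => Real.sinh y / Real.cosh y)
      ((Real.cosh x * Real.cosh x - Real.sinh x * Real.sinh x) / Real.cosh x ^ 2) x :=
    (Real.hasDerivAt_sinh x).div (Real.hasDerivAt_cosh x) (Real.cosh_pos x).ne'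
  have h1 : (Real.cosh x * Real.cosh x - Real.sinh x * Real.sinh x) = 1 := by
    have := Real.cosh_sq_sub_sinh_sq x; nlinarith
  rw [h1] at h
  exact h.congr_of_eventuallyEq (by filter_upwards with y using (Real.tanh_eq_sinh_div_cosh y))

/-- The outer profile. -/
noncomputable def exG (x : ℝ) : ℝ := 2 * exH * Real.sinh x / Real.cosh x ^ 2
noncomputable def exG' (x : ℝ) : ℝ := 2 * exH * (1 - Real.sinh x ^ 2) / Real.cosh x ^ 3
noncomputable def exG'' (x : ℝ) : ℝ :=
  2 * exH * Real.sinh x * (Real.sinh x ^ 2 - 5) / Real.cosh x ^ 4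

lemma hasDerivAt_exG (x : ℝ) : HasDerivAt exG (exG' x) x := by
  have hc := (Real.cosh_pos x).ne'
  have h : HasDerivAt (fun y => 2 * exH * Real.sinh y / Real.cosh y ^ 2)
      ((2 * exH * Real.cosh x * Real.cosh x ^ 2 -
        2 * exH * Real.sinh x * (2 * Real.cosh x ^ 1 * Real.sinh x)) / (Real.cosh x ^ 2) ^ 2) x :=
    (((Real.hasDerivAt_sinh x).const_mul (2 * exH)).div
      ((Real.hasDerivAt_cosh x).pow 2) (by positivity))
  convert h using 1
  · rfl
  have hsq := Real.cosh_sq x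
  rw [exG']
  field_simp
  linear_combination (-exH) * hsq

lemma hasDerivAt_exG' (x : ℝ) : HasDerivAt exG' (exG'' x) x := by
  have hc := (Real.cosh_pos x).ne'
  have h : HasDerivAt (fun y => 2 * exH * (1 - Real.sinh y ^ 2) / Real.cosh y ^ 3)
      (((-(2 * Real.sinh x ^ 1 * Real.cosh x)) * (2 * exH) * Real.cosh x ^ 3 -
        2 * exH * (1 - Real.sinh x ^ 2) * (3 * Real.cosh x ^ 2 * Real.sinh x)) /
        (Real.cosh x ^ 3) ^ 2) x := by
    have hnum : HasDerivAt (fun y => 2 * exH * (1 - Real.sinh y ^ 2))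
        ((-(2 * Real.sinh x ^ 1 * Real.cosh x)) * (2 * exH)) x := by
      have h0 : HasDerivAt (fun y => 1 - Real.sinh y ^ 2)
          (-(2 * Real.sinh x ^ 1 * Real.cosh x)) x :=
        (((Real.hasDerivAt_sinh x).pow 2).const_sub 1)
      simpa [mul_comm] using h0.const_mul (2 * exH)
    exact hnum.div ((Real.hasDerivAt_cosh x).pow 3) (by positivity)
  convert h using 1
  · rfl
  have hsq := Real.cosh_sq x
  rw [exG'']
  field_simp
  linear_combination (2*exH*Real.sinh x) * hsq

lemma continuous_exG : Continuous exG :=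
  (continuous_const.mul Real.continuous_sinh).div (Real.continuous_cosh.pow 2)
    fun x => by positivity
lemma continuous_exG' : Continuous exG' :=
  (continuous_const.mul (continuous_const.sub (Real.continuous_sinh.pow 2))).div
    (Real.continuous_cosh.pow 3) fun x => by positivity

lemma exG_exW : exG exW = exH := by
  rw [exG, sinh_exW, cosh_exW]
  have := sqrt2_sq
  field_simp
  rw [this]; ring
lemma exG_neg_exW : exG (-exW) = -exH := by
  rw [exG, Real.sinh_neg, Real.cosh_neg, sinh_exW, cosh_exW]
  have := sqrt2_sq
  field_simp
  rw [this]; ring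
lemma exG'_exW : exG' exW = 0 := by
  rw [exG', sinh_exW]; norm_num
lemma exG'_neg_exW : exG' (-exW) = 0 := by
  rw [exG', Real.sinh_neg, sinh_exW]; norm_num

/-- The stationary ODE satisfied by `exG` outside the plateau. -/
lemma exG_ode (x : ℝ) :
    exG'' x + (2 / Real.cosh x ^ 2) * exG x + 2 * Real.tanh x * exG' x + exG x = 0 := by
  have hc := (Real.cosh_pos x).ne'
  have hsq := Real.cosh_sq x
  rw [exG, exG', exG'', Real.tanh_eq_sinh_div_cosh]
  field_simp
  linear_combination (2*exH*Real.sinh x) * hsq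

/-- Example 1.1, weak stationarity: `u` together with the removal measure with density
`h(1 + 2 sech²x)` on `[−w, w]` is a stationary weak solution of
`∂ₜu = u'' + (2 tanh(x) u)' + u − β`, and the removal measure is a probability measure. -/
theorem stmt12 :
    (∀ φ : ℝ → ℝ, ContDiff ℝ (⊤ : ℕ∞) φ → HasCompactSupport φ →
      ∫ x : ℝ, (deriv (deriv φ) x - 2 * Real.tanh x * deriv φ x + φ x) * exU x
        = ∫ x in Icc (-exW) exW, φ x * (exH * (1 + 2 / (Real.cosh x) ^ 2))) ∧
    (∫ x in Icc (-exW) exW, exH * (1 + 2 / (Real.cosh x) ^ 2)) = 1 := by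
  have hIcc_eq : ∀ a b : ℝ, a ≤ b → ∀ f : ℝ → ℝ,
      (∫ x in Icc a b, f x) = ∫ x in a..b, f x := by
    intro a b hab f
    rw [intervalIntegral.integral_of_le hab, MeasureTheory.integral_Icc_eq_integral_Ioc]
  have hww : -exW ≤ exW := by linarith [exW_pos]
  have hβc : Continuous (fun x => exH * (1 + 2 / Real.cosh x ^ 2)) :=
    continuous_const.mul (continuous_const.add
      (continuous_const.div (Real.continuous_cosh.pow 2) (fun x => by positivity)))
  constructor
  · intro φ hφ hφc
    have hphiI : ContDiff ℝ ((⊤ : ℕ∞) : WithTop ℕ∞) φ := hφ.of_le (by simp)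
    have hφd : Differentiable ℝ φ := hphiI.differentiable (by norm_num)
    have hφ1 : ContDiff ℝ ((⊤ : ℕ∞) : WithTop ℕ∞) (deriv φ) := (contDiff_infty_iff_deriv.mp hphiI).2
    have hφ1d : Differentiable ℝ (deriv φ) := hφ1.differentiable (by norm_num)
    have hcφ : Continuous φ := hphiI.continuous
    have hcφ1 : Continuous (deriv φ) := hφ1.continuous
    have hcφ2 : Continuous (deriv (deriv φ)) := (contDiff_infty_iff_deriv.mp hφ1).2.continuous
    set Ψ : ℝ → ℝ := fun x => deriv (deriv φ) x - 2 * Real.tanh x * deriv φ x + φ x with hΨdef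
    have hΨc : Continuous Ψ :=
      (hcφ2.sub ((continuous_const.mul continuous_tanh').mul hcφ1)).add hcφ
    -- support radius
    obtain ⟨r, hr⟩ := (Metric.isBounded_iff_subset_closedBall 0).mp hφc.isBounded
    set m : ℝ := max r exW with hm
    have hsub : tsupport φ ⊆ Icc (-m) m := by
      refine hr.trans ?_
      rw [Real.closedBall_eq_Icc]
      apply Icc_subset_Icc
      · simp only [zero_sub, hm, neg_le_neg_iff]
        exact le_max_left _ _
      · simp only [zero_add, hm]
        exact le_max_left _ _
    have hzero : ∀ x, x ∉ Icc (-m) m → φ x = 0 ∧ deriv φ x = 0 ∧ deriv (deriv φ) x = 0 := by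
      intro x hx
      have hx1 : x ∉ tsupport φ := fun h => hx (hsub h)
      have hd1 : tsupport (deriv φ) ⊆ tsupport φ :=
        closure_minimal support_deriv_subset (isClosed_tsupport φ)
      have hx2 : x ∉ tsupport (deriv φ) := fun h => hx1 (hd1 h)
      have hd2 : tsupport (deriv (deriv φ)) ⊆ tsupport (deriv φ) :=
        closure_minimal support_deriv_subset (isClosed_tsupport _)
      exact ⟨image_eq_zero_of_notMem_tsupport hx1, image_eq_zero_of_notMem_tsupport hx2,
        image_eq_zero_of_notMem_tsupport (fun h => hx2 (hd2 h))⟩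
    set R : ℝ := m + 1 with hRdef
    have hwm : exW ≤ m := le_max_right _ _
    have hwR : exW < R := by simp only [hRdef]; linarith
    have hA : ∫ x : ℝ, Ψ x * exU x = ∫ x in Icc (-R) R, Ψ x * exU x := by
      refine (setIntegral_eq_integral_of_forall_compl_eq_zero ?_).symm
      intro x hx
      have hx' : x ∉ Icc (-m) m := by
        intro hh
        exact hx (Icc_subset_Icc (by simp only [hRdef]; linarith) (by simp only [hRdef]; linarith) hh)
      obtain ⟨h0, h1, h2⟩ := hzero x hx'
      simp only [hΨdef, h0, h1, h2]
      ring
    -- pointwise identifications of exU on the three pieces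
    have hU1 : ∀ x ∈ Icc exW R, exU x = exG x := by
      intro x hx
      have hx0 : 0 ≤ x := le_trans exW_pos.le hx.1
      have habs : |x| = x := abs_of_nonneg hx0
      rw [exU, habs]
      by_cases hc : x ≤ exW
      · rw [if_pos hc, le_antisymm hc hx.1, exG_exW]
      · rw [if_neg hc, exG]
    have hU2 : ∀ x ∈ Icc (-exW) exW, exU x = exH := by
      intro x hx
      rw [exU, if_pos (abs_le.mpr ⟨hx.1, hx.2⟩)]
    have hU3 : ∀ x ∈ Icc (-R) (-exW), exU x = -exG x := by
      intro x hx
      have hx0 : x ≤ 0 := le_trans hx.2 (by linarith [exW_pos])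
      have habs : |x| = -x := abs_of_nonpos hx0
      rw [exU, habs, Real.sinh_neg, Real.cosh_neg]
      by_cases hc : -x ≤ exW
      · have hxw : x = -exW := le_antisymm hx.2 (by linarith)
        rw [if_pos hc, hxw, exG_neg_exW, neg_neg]
      · rw [if_neg hc, exG]
        ring
    -- continuity of the three glued versions
    have hcont1 : Continuous (fun x => Ψ x * exG x) := hΨc.mul continuous_exG
    have hcont2 : Continuous (fun x => Ψ x * exH) := hΨc.mul continuous_const
    have hcont3 : Continuous (fun x => Ψ x * (-exG x)) := hΨc.mul continuous_exG.neg
    -- interval integrability of Ψ * exU on the three pieces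
    have hi1 : IntervalIntegrable (fun x => Ψ x * exU x) volume exW R := by
      apply ContinuousOn.intervalIntegrable
      rw [uIcc_of_le hwR.le]
      exact hcont1.continuousOn.congr (fun x hx => by rw [hU1 x hx])
    have hi2 : IntervalIntegrable (fun x => Ψ x * exU x) volume (-exW) exW := by
      apply ContinuousOn.intervalIntegrable
      rw [uIcc_of_le hww]
      exact hcont2.continuousOn.congr (fun x hx => by rw [hU2 x hx])
    have hi3 : IntervalIntegrable (fun x => Ψ x * exU x) volume (-R) (-exW) := by
      apply ContinuousOn.intervalIntegrable
      rw [uIcc_of_le (by linarith : -R ≤ -exW)]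
      exact hcont3.continuousOn.congr (fun x hx => by rw [hU3 x hx])
    have hsplit1 := intervalIntegral.integral_add_adjacent_intervals hi3 hi2
    have hsplit2 := intervalIntegral.integral_add_adjacent_intervals (hi3.trans hi2) hi1
    -- the antiderivative on the outer pieces
    set F : ℝ → ℝ := fun x =>
      deriv φ x * exG x - φ x * exG' x - 2 * Real.tanh x * exG x * φ x with hFdef
    have hFderiv : ∀ x, HasDerivAt F (Ψ x * exG x) x := by
      intro x
      have h1 : HasDerivAt (fun y => deriv φ y * exG y)
          (deriv (deriv φ) x * exG x + deriv φ x * exG' x) x :=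
        (hφ1d x).hasDerivAt.mul (hasDerivAt_exG x)
      have h2 : HasDerivAt (fun y => φ y * exG' y)
          (deriv φ x * exG' x + φ x * exG'' x) x :=
        (hφd x).hasDerivAt.mul (hasDerivAt_exG' x)
      have ht : HasDerivAt (fun y => 2 * Real.tanh y) (2 * (1 / Real.cosh x ^ 2)) x := by
        simpa [mul_comm] using (hasDerivAt_tanh x).const_mul 2
      have h3 : HasDerivAt (fun y => 2 * Real.tanh y * exG y * φ y)
          ((2 * (1 / Real.cosh x ^ 2) * exG x + 2 * Real.tanh x * exG' x) * φ x
            + 2 * Real.tanh x * exG x * deriv φ x) x :=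
        (ht.mul (hasDerivAt_exG x)).mul (hφd x).hasDerivAt
      have hcomb := (h1.sub h2).sub h3
      refine hcomb.congr_deriv (Eq.symm ?_)
      have hode := exG_ode x
      simp only [hΨdef]
      linear_combination (φ x) * hode
    have hRnotin : R ∉ Icc (-m) m := by
      intro h
      have := h.2
      simp only [hRdef] at this
      linarith
    have hnegRnotin : -R ∉ Icc (-m) m := by
      intro h
      have := h.1
      simp only [hRdef] at this
      linarith [hwm, exW_pos]
    have hFR : F R = 0 := by
      obtain ⟨h0, h1, -⟩ := hzero R hRnotin
      simp only [hFdef, h0, h1]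
      ring
    have hFnegR : F (-R) = 0 := by
      obtain ⟨h0, h1, -⟩ := hzero (-R) hnegRnotin
      simp only [hFdef, h0, h1]
      ring
    have hP3 : ∫ x in exW..R, Ψ x * exU x = -F exW := by
      rw [intervalIntegral.integral_congr (g := fun x => Ψ x * exG x)
        (by rw [uIcc_of_le hwR.le]; exact fun x hx => by simp only; rw [hU1 x hx])]
      rw [intervalIntegral.integral_eq_sub_of_hasDerivAt (fun x _ => hFderiv x)
        (hcont1.intervalIntegrable _ _), hFR]
      ring
    have hP1 : ∫ x in (-R)..(-exW), Ψ x * exU x = -F (-exW) := by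
      have hFneg : ∀ x, HasDerivAt (fun y => -F y) (Ψ x * (-exG x)) x := fun x => by
        rw [mul_neg]; exact (hFderiv x).neg
      rw [intervalIntegral.integral_congr (g := fun x => Ψ x * (-exG x))
        (by rw [uIcc_of_le (by linarith : -R ≤ -exW)]
            exact fun x hx => by simp only; rw [hU3 x hx])]
      rw [intervalIntegral.integral_eq_sub_of_hasDerivAt (fun x _ => hFneg x)
        (hcont3.intervalIntegrable _ _)]
      simp [hFnegR]
    -- middle piece
    set M : ℝ → ℝ := fun x => deriv φ x * exH - 2 * Real.tanh x * φ x * exH with hMdef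
    have hMderiv : ∀ x, HasDerivAt M
        (Ψ x * exH - φ x * (exH * (1 + 2 / Real.cosh x ^ 2))) x := by
      intro x
      have h1 : HasDerivAt (fun y => deriv φ y * exH) (deriv (deriv φ) x * exH) x :=
        (hφ1d x).hasDerivAt.mul_const exH
      have ht : HasDerivAt (fun y => 2 * Real.tanh y) (2 * (1 / Real.cosh x ^ 2)) x := by
        simpa [mul_comm] using (hasDerivAt_tanh x).const_mul 2
      have h2 : HasDerivAt (fun y => 2 * Real.tanh y * φ y * exH)
          ((2 * (1 / Real.cosh x ^ 2) * φ x + 2 * Real.tanh x * deriv φ x) * exH) x :=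
        (ht.mul (hφd x).hasDerivAt).mul_const exH
      have hcomb := h1.sub h2
      refine hcomb.congr_deriv (Eq.symm ?_)
      simp only [hΨdef]
      ring
    have hP2 : ∫ x in (-exW)..exW, Ψ x * exU x
        = (M exW - M (-exW)) + ∫ x in (-exW)..exW, φ x * (exH * (1 + 2 / Real.cosh x ^ 2)) := by
      rw [intervalIntegral.integral_congr (g := fun x => Ψ x * exH)
        (by rw [uIcc_of_le hww]; exact fun x hx => by simp only; rw [hU2 x hx])]
      rw [intervalIntegral.integral_congr
        (g := fun x => (Ψ x * exH - φ x * (exH * (1 + 2 / Real.cosh x ^ 2)))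
          + φ x * (exH * (1 + 2 / Real.cosh x ^ 2))) (fun x _ => by ring)]
      rw [intervalIntegral.integral_add (f := fun x => Ψ x * exH - φ x * (exH * (1 + 2 / Real.cosh x ^ 2)))
        (g := fun x => φ x * (exH * (1 + 2 / Real.cosh x ^ 2)))
        ((hcont2.sub (hcφ.mul hβc)).intervalIntegrable _ _)
        ((hcφ.mul hβc).intervalIntegrable _ _)]
      rw [intervalIntegral.integral_eq_sub_of_hasDerivAt (fun x _ => hMderiv x)
        ((hcont2.sub (hcφ.mul hβc)).intervalIntegrable _ _)]
    have hFW : F exW = M exW := by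
      simp only [hFdef, hMdef, exG_exW, exG'_exW]
      ring
    have hFnW : F (-exW) = -M (-exW) := by
      simp only [hFdef, hMdef, exG_neg_exW, exG'_neg_exW]
      ring
    calc ∫ x : ℝ, Ψ x * exU x
        = ∫ x in (-R)..R, Ψ x * exU x := by
          rw [hA, hIcc_eq _ _ (by linarith) _]
      _ = (∫ x in (-R)..(-exW), Ψ x * exU x) + (∫ x in (-exW)..exW, Ψ x * exU x)
            + (∫ x in exW..R, Ψ x * exU x) := by rw [← hsplit2, ← hsplit1]
      _ = ∫ x in (-exW)..exW, φ x * (exH * (1 + 2 / Real.cosh x ^ 2)) := by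
          rw [hP1, hP2, hP3, hFW, hFnW]
          ring
      _ = ∫ x in Icc (-exW) exW, φ x * (exH * (1 + 2 / Real.cosh x ^ 2)) :=
          (hIcc_eq _ _ hww _).symm
  · rw [hIcc_eq _ _ hww _]
    have hAd : ∀ x ∈ uIcc (-exW) exW,
        HasDerivAt (fun y => exH * (y + 2 * Real.tanh y)) (exH * (1 + 2 / Real.cosh x ^ 2)) x := by
      intro x _
      have h := ((hasDerivAt_id x).add ((hasDerivAt_tanh x).const_mul 2)).const_mul exH
      refine h.congr_deriv (Eq.symm ?_)
      ring
    rw [intervalIntegral.integral_eq_sub_of_hasDerivAt hAd (hβc.intervalIntegrable _ _)]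
    simp only [Real.tanh_neg, tanh_exW]
    have h2 := sqrt2_sq
    have hs2 := sqrt2_pos
    have hpos : 0 < exW + Real.sqrt 2 := by linarith [exW_pos]
    rw [exH]
    field_simp
    ring_nf
    nlinarith [h2, hs2]
end
end

section
/- Example 1.2, flat-top stationary profiles: Let a > 2 and w ≥ 0, and let u be as defined below. Then u is continuous on ℝ; ∫_ℝ u(x) dx = 1; u(x) ≤ 1/(2(w+a)) for all x, with strict inequality for |x| > w (so the supremum of u is attained exactly on [−w,w]); and for every x > w, u''(x) + a u'(x) + u(x) = 0. -/
/-!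
Outside the plateau the profile is `c · (λ₂ e^{-λ₁ t} - λ₁ e^{-λ₂ t})` with `t = |x| - w` and
`c = 1 / (2 (w + a) r)`. Since `λ₁, λ₂` are the roots of `X² - aX + 1`, both exponentials solve
`y'' + a y' + y = 0`. At `t = 0` the tail equals `c (λ₂ - λ₁) = c r`, the plateau height, and its
derivative `λ₁ λ₂ (e^{-λ₂ t} - e^{-λ₁ t})` is negative, so the tail stays strictly below the plateau.
The mass is `2 (w / (2 (w + a)) + c (λ₂ / λ₁ - λ₁ / λ₂))`, and `λ₂ / λ₁ - λ₁ / λ₂ = λ₂² - λ₁² = r a`.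
-/

open MeasureTheory Set

noncomputable section

open Real Filter Topology

section Shift

variable {E : Type*} [NormedAddCommGroup E]

theorem integral_comp_sub_Ioi [NormedSpace ℝ E] (g : ℝ → E) (w : ℝ) :
    ∫ t in Ioi w, g (t - w) = ∫ t in Ioi 0, g t := by
  simpa using (measurePreserving_sub_right volume w).setIntegral_preimage_emb
    (measurableEmbedding_subRight w) g (Ioi 0)

theorem integrableOn_comp_sub_Ioi {g : ℝ → E} (w : ℝ) (hg : IntegrableOn g (Ioi 0)) :
    IntegrableOn (fun t => g (t - w)) (Ioi w) := by
  simpa [Function.comp_def] using ((measurePreserving_sub_right volume w).integrableOn_comp_preimage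
    (measurableEmbedding_subRight w)).2 hg

end Shift

theorem integrableOn_exp_neg_mul_Ioi {l : ℝ} (hl : 0 < l) :
    IntegrableOn (fun t => exp (-(l * t))) (Ioi 0) := by
  simpa only [neg_mul] using integrableOn_exp_mul_Ioi (neg_neg_of_pos hl) 0

theorem integral_exp_neg_mul_Ioi_zero {l : ℝ} (hl : 0 < l) :
    ∫ t in Ioi 0, exp (-(l * t)) = 1 / l := by
  have := integral_exp_mul_Ioi (neg_neg_of_pos hl) 0
  simp only [neg_mul, mul_zero, exp_zero] at this
  rw [this, neg_div_neg_eq]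

theorem hasDerivAt_exp_neg_mul (l t : ℝ) :
    HasDerivAt (fun t => exp (-(l * t))) (-l * exp (-(l * t))) t := by
  simpa [mul_comm] using ((hasDerivAt_id t).const_mul l).neg.exp

def flatTop (w C : ℝ) (g : ℝ → ℝ) (x : ℝ) : ℝ :=
  if |x| ≤ w then C else g (|x| - w)

section FlatTop

variable {w C x : ℝ} {g : ℝ → ℝ}

theorem flatTop_of_abs_le (h : |x| ≤ w) : flatTop w C g x = C := if_pos h

theorem flatTop_of_lt_abs (h : w < |x|) : flatTop w C g x = g (|x| - w) := if_neg h.not_ge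

theorem continuous_flatTop (hg : Continuous g) (h0 : g 0 = C) : Continuous (flatTop w C g) :=
  continuous_const.if_le (hg.comp (continuous_abs.sub continuous_const)) continuous_abs
    continuous_const fun x hx => by simp [hx, h0]

theorem integral_flatTop (hw : 0 ≤ w) (hg : IntegrableOn g (Ioi 0)) :
    ∫ x, flatTop w C g x = 2 * (w * C + ∫ t in Ioi 0, g t) := by
  let F : ℝ → ℝ := fun s => if s ≤ w then C else g (s - w)
  have hFc : IntegrableOn F (Ioc 0 w) :=
    (integrableOn_const measure_Ioc_lt_top.ne).congr_fun (fun t ht => (if_pos ht.2).symm)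
      measurableSet_Ioc
  have hFg : IntegrableOn F (Ioi w) :=
    (integrableOn_comp_sub_Ioi w hg).congr_fun (fun t ht => (if_neg (not_le.2 ht)).symm)
      measurableSet_Ioi
  have hc : ∫ t in Ioc 0 w, F t = w * C := by
    rw [setIntegral_congr_fun measurableSet_Ioc (fun t ht => if_pos ht.2)]
    simp [hw]
  have hg' : ∫ t in Ioi w, F t = ∫ t in Ioi 0, g t := by
    rw [setIntegral_congr_fun measurableSet_Ioi (fun t ht => if_neg (not_le.2 ht)),
      integral_comp_sub_Ioi]
  change ∫ x, F |x| = _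
  rw [integral_comp_abs]
  conv_lhs => rw [← Ioc_union_Ioi_eq_Ioi hw,
    setIntegral_union (Ioc_disjoint_Ioi le_rfl) measurableSet_Ioi hFc hFg, hc, hg']

theorem flatTop_eventuallyEq (hw : 0 ≤ w) (hx : w < x) :
    flatTop w C g =ᶠ[𝓝 x] fun y => g (y - w) := by
  filter_upwards [Ioi_mem_nhds hx] with y hy
  rw [flatTop_of_lt_abs (hy.trans_le (le_abs_self y)), abs_of_pos (hw.trans_lt hy)]

theorem flatTop_of_lt (hw : 0 ≤ w) (hx : w < x) : flatTop w C g x = g (x - w) :=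
  (flatTop_eventuallyEq hw hx).eq_of_nhds

theorem deriv_flatTop (hw : 0 ≤ w) (hx : w < x) :
    deriv (flatTop w C g) x = deriv g (x - w) := by
  rw [(flatTop_eventuallyEq hw hx).deriv_eq, deriv_comp_sub_const]

theorem deriv_deriv_flatTop (hw : 0 ≤ w) (hx : w < x) :
    deriv (deriv (flatTop w C g)) x = deriv (deriv g) (x - w) := by
  have hshift : deriv (fun y => g (y - w)) = fun y => deriv g (y - w) :=
    funext fun _ => deriv_comp_sub_const ..
  rw [(flatTop_eventuallyEq hw hx).deriv.deriv_eq, hshift, deriv_comp_sub_const]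

end FlatTop

def tailProfile (l₁ l₂ t : ℝ) : ℝ :=
  l₂ * exp (-(l₁ * t)) - l₁ * exp (-(l₂ * t))

section TailProfile

variable {l₁ l₂ : ℝ}

theorem tailProfile_zero : tailProfile l₁ l₂ 0 = l₂ - l₁ := by
  simp [tailProfile]

theorem continuous_tailProfile : Continuous (tailProfile l₁ l₂) := by
  unfold tailProfile; fun_prop

theorem deriv_tailProfile :
    deriv (tailProfile l₁ l₂) = fun t => l₁ * l₂ * (exp (-(l₂ * t)) - exp (-(l₁ * t))) := by
  funext t
  have h : HasDerivAt (tailProfile l₁ l₂) _ t :=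
    ((hasDerivAt_exp_neg_mul l₁ t).const_mul l₂).sub ((hasDerivAt_exp_neg_mul l₂ t).const_mul l₁)
  rw [h.deriv]
  ring

theorem deriv_deriv_tailProfile :
    deriv (deriv (tailProfile l₁ l₂)) =
      fun t => l₁ * l₂ * (l₁ * exp (-(l₁ * t)) - l₂ * exp (-(l₂ * t))) := by
  funext t
  have h : HasDerivAt (fun t => l₁ * l₂ * (exp (-(l₂ * t)) - exp (-(l₁ * t)))) _ t :=
    ((hasDerivAt_exp_neg_mul l₂ t).sub (hasDerivAt_exp_neg_mul l₁ t)).const_mul (l₁ * l₂)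
  rw [deriv_tailProfile, h.deriv]
  ring

theorem tailProfile_ode (t : ℝ) :
    deriv (deriv (tailProfile l₁ l₂)) t + (l₁ + l₂) * deriv (tailProfile l₁ l₂) t
      + l₁ * l₂ * tailProfile l₁ l₂ t = 0 := by
  rw [deriv_deriv_tailProfile, deriv_tailProfile, tailProfile]
  ring

theorem strictAntiOn_tailProfile (h₁ : 0 < l₁) (h₁₂ : l₁ < l₂) :
    StrictAntiOn (tailProfile l₁ l₂) (Ici 0) := by
  refine strictAntiOn_of_deriv_neg (convex_Ici 0) continuous_tailProfile.continuousOn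
    fun t ht => ?_
  rw [interior_Ici, mem_Ioi] at ht
  have hexp : exp (-(l₂ * t)) < exp (-(l₁ * t)) :=
    exp_lt_exp.2 (neg_lt_neg (mul_lt_mul_of_pos_right h₁₂ ht))
  rw [deriv_tailProfile]
  exact mul_neg_of_pos_of_neg (mul_pos h₁ (h₁.trans h₁₂)) (sub_neg.2 hexp)

theorem tailProfile_lt (h₁ : 0 < l₁) (h₁₂ : l₁ < l₂) {t : ℝ} (ht : 0 < t) :
    tailProfile l₁ l₂ t < l₂ - l₁ :=
  tailProfile_zero (l₁ := l₁) ▸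
    strictAntiOn_tailProfile h₁ h₁₂ self_mem_Ici (mem_Ici.2 ht.le) ht

theorem integrableOn_tailProfile (h₁ : 0 < l₁) (h₂ : 0 < l₂) :
    IntegrableOn (tailProfile l₁ l₂) (Ioi 0) :=
  ((integrableOn_exp_neg_mul_Ioi h₁).const_mul l₂).sub
    ((integrableOn_exp_neg_mul_Ioi h₂).const_mul l₁)

theorem integral_tailProfile (h₁ : 0 < l₁) (h₂ : 0 < l₂) :
    ∫ t in Ioi 0, tailProfile l₁ l₂ t = (l₂ - l₁) * (l₁ + l₂) / (l₁ * l₂) := by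
  simp only [tailProfile]
  rw [integral_sub ((integrableOn_exp_neg_mul_Ioi h₁).const_mul l₂)
      ((integrableOn_exp_neg_mul_Ioi h₂).const_mul l₁),
    integral_const_mul, integral_const_mul, integral_exp_neg_mul_Ioi_zero h₁,
    integral_exp_neg_mul_Ioi_zero h₂]
  field_simp
  ring

end TailProfile

theorem roots_of_two_lt {a r l₁ l₂ : ℝ} (ha : 2 < a) (hr : r = √(a ^ 2 - 4))
    (hl₁ : l₁ = (a - r) / 2) (hl₂ : l₂ = (a + r) / 2) :
    0 < l₁ ∧ l₁ < l₂ ∧ l₁ * l₂ = 1 ∧ l₁ + l₂ = a ∧ l₂ - l₁ = r := by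
  have hpos : 0 < a ^ 2 - 4 := by nlinarith
  have hr2 : r ^ 2 = a ^ 2 - 4 := hr ▸ sq_sqrt hpos.le
  have hr0 : 0 < r := hr ▸ sqrt_pos.2 hpos
  subst hl₁ hl₂
  refine ⟨by nlinarith, by linarith, by linear_combination -hr2 / 4, by ring, by ring⟩

/-- Example 1.2, flat-top stationary profiles for drift `b(x) = −a·sgn(x)`, `a > 2`. -/
theorem stmt15 (a w : ℝ) (ha : 2 < a) (hw : 0 ≤ w)
    (r lam₁ lam₂ : ℝ) (hr : r = Real.sqrt (a ^ 2 - 4))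
    (hlam₁ : lam₁ = (a - r) / 2) (hlam₂ : lam₂ = (a + r) / 2)
    (u : ℝ → ℝ)
    (hu : ∀ x : ℝ, u x =
      if |x| ≤ w then 1 / (2 * (w + a))
      else (1 / (2 * (w + a) * r))
        * (lam₂ * Real.exp (-(lam₁ * (|x| - w))) - lam₁ * Real.exp (-(lam₂ * (|x| - w))))) :
    Continuous u ∧
    (∫ x : ℝ, u x) = 1 ∧
    (∀ x : ℝ, u x ≤ 1 / (2 * (w + a))) ∧
    (∀ x : ℝ, w < |x| → u x < 1 / (2 * (w + a))) ∧
    (∀ x : ℝ, w < x → deriv (deriv u) x + a * deriv u x + u x = 0) := by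
  obtain ⟨h₁, h₁₂, hprod, hsum, hdiff⟩ := roots_of_two_lt ha hr hlam₁ hlam₂
  have hr0 : 0 < r := hdiff ▸ sub_pos.2 h₁₂
  set C := 1 / (2 * (w + a))
  set c := 1 / (2 * (w + a) * r)
  have hcr : c * r = C := by simp only [c, C]; field_simp
  have hu' : u = flatTop w C fun t => c * tailProfile lam₁ lam₂ t := funext hu
  have hlt : ∀ x, w < |x| → u x < C := fun x hx => by
    rw [hu', flatTop_of_lt_abs hx, ← hcr, ← hdiff]
    exact mul_lt_mul_of_pos_left (tailProfile_lt h₁ h₁₂ (sub_pos.2 hx)) (by positivity)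
  refine ⟨?_, ?_, fun x => ?_, hlt, fun x hx => ?_⟩
  · exact hu' ▸ continuous_flatTop (continuous_tailProfile.const_mul c)
      (by rw [tailProfile_zero, hdiff, hcr])
  · rw [hu', integral_flatTop hw ((integrableOn_tailProfile h₁ (h₁.trans h₁₂)).const_mul c),
      integral_const_mul, integral_tailProfile h₁ (h₁.trans h₁₂), hdiff, hsum, hprod, div_one,
      ← mul_assoc, hcr]
    simp only [C]
    field_simp
  · rcases le_or_gt |x| w with h | h
    · rw [hu', flatTop_of_abs_le h]
    · exact (hlt x h).le
  · rw [hu', deriv_deriv_flatTop hw hx, deriv_flatTop hw hx, flatTop_of_lt hw hx,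
      deriv_const_mul_field', deriv_const_mul_field']
    linear_combination c * tailProfile_ode (x - w)
      - c * deriv (tailProfile lam₁ lam₂) (x - w) * hsum - c * tailProfile lam₁ lam₂ (x - w) * hprod
end
end

section
/- Example 1.2, sharp-top stationary profile: Let a > 2 and define u(x) = e^{−λ₂|x|}/(2λ₁). Then ∫_ℝ u(x) dx = 1; u(x) < u(0) = 1/(2λ₁) for every x ≠ 0 (so the supremum of u is attained exactly at 0); and for every φ ∈ C_c^∞(ℝ), ∫_ℝ (φ''(x) − a·sgn(x)·φ'(x) + φ(x)) u(x) dx = φ(0). In other words, (u, δ₀) is a stationary weak solution of ∂_t u = u'' + (a·sgn(x) u)' + u − β with β_t = δ₀. -/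
open MeasureTheory Set Filter Topology

noncomputable section

/-- A function built from `φ`, `deriv φ`, `deriv (deriv φ)` has compact support. -/
lemma supp_comb (φ : ℝ → ℝ) (hs : HasCompactSupport φ) {g : ℝ → ℝ}
    (hg : ∀ x, φ x = 0 → deriv φ x = 0 → deriv (deriv φ) x = 0 → g x = 0) :
    HasCompactSupport g := by
  apply hs.mono'
  intro x hx
  by_contra hxt
  have h0 : φ x = 0 := image_eq_zero_of_notMem_tsupport hxt
  have h1 : deriv φ x = 0 := by
    by_contra h
    exact hxt (support_deriv_subset (by simpa using h))
  have h2 : deriv (deriv φ) x = 0 := by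
    by_contra h
    have : x ∈ tsupport (deriv φ) := support_deriv_subset (by simpa using h)
    exact hxt (closure_minimal support_deriv_subset (isClosed_tsupport φ) this)
  exact hx (hg x h0 h1 h2)

lemma key_Ioi (c d : ℝ) (φ : ℝ → ℝ) (hφ : ContDiff ℝ ((⊤:ℕ∞):WithTop ℕ∞) φ) (hs : HasCompactSupport φ) :
    ∫ x in Ioi (0 : ℝ),
      (deriv (deriv φ) x - (c + d) * deriv φ x + c * d * φ x) * Real.exp (-(c * x))
      = d * φ 0 - deriv φ 0 := by
  have hφ1 : Differentiable ℝ φ := hφ.differentiable (by simp)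
  have hφd : ContDiff ℝ ((⊤:ℕ∞):WithTop ℕ∞) (deriv φ) := (contDiff_infty_iff_deriv.mp hφ).2
  have hφ2 : Differentiable ℝ (deriv φ) := hφd.differentiable (by simp)
  have hφdd : ContDiff ℝ ((⊤:ℕ∞):WithTop ℕ∞) (deriv (deriv φ)) :=
    (contDiff_infty_iff_deriv.mp hφd).2
  set F : ℝ → ℝ := fun x => (deriv φ x - d * φ x) * Real.exp (-(c * x)) with hF
  set G : ℝ → ℝ := fun x =>
    (deriv (deriv φ) x - (c + d) * deriv φ x + c * d * φ x) * Real.exp (-(c * x)) with hG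
  have hFd : ∀ x : ℝ, HasDerivAt F (G x) x := by
    intro x
    have h1 : HasDerivAt (fun x => deriv φ x - d * φ x)
        (deriv (deriv φ) x - d * deriv φ x) x :=
      ((hφ2 x).hasDerivAt).sub (((hφ1 x).hasDerivAt).const_mul d)
    have h2 : HasDerivAt (fun x : ℝ => Real.exp (-(c * x))) (Real.exp (-(c * x)) * -c) x := by
      simpa using (((hasDerivAt_id x).const_mul c).neg).exp
    have := h1.mul h2
    refine this.congr_deriv ?_
    simp only [hG]
    ring
  have hFsupp : HasCompactSupport F := by
    refine supp_comb φ hs fun x h0 h1 _ => ?_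
    simp [hF, h0, h1]
  have hGsupp : HasCompactSupport G := by
    refine supp_comb φ hs fun x h0 h1 h2 => ?_
    simp [hG, h0, h1, h2]
  have hGcont : Continuous G := by
    apply Continuous.mul
    · exact ((hφdd.continuous.sub (continuous_const.mul hφd.continuous)).add
        (continuous_const.mul hφ1.continuous))
    · exact (continuous_const.mul continuous_id).neg.rexp
  have hGint : IntegrableOn G (Ioi 0) :=
    (hGcont.integrable_of_hasCompactSupport hGsupp).integrableOn
  have htend : Tendsto F atTop (𝓝 0) := by
    rw [hasCompactSupport_iff_eventuallyEq, Filter.coclosedCompact_eq_cocompact] at hFsupp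
    exact (hFsupp.filter_mono atTop_le_cocompact).tendsto
  have := integral_Ioi_of_hasDerivAt_of_tendsto' (fun x _ => hFd x) hGint htend
  rw [this]
  simp [hF]

lemma key_Iic (c d : ℝ) (φ : ℝ → ℝ) (hφ : ContDiff ℝ ((⊤:ℕ∞):WithTop ℕ∞) φ) (hs : HasCompactSupport φ) :
    ∫ x in Iic (0 : ℝ),
      (deriv (deriv φ) x + (c + d) * deriv φ x + c * d * φ x) * Real.exp (c * x)
      = deriv φ 0 + d * φ 0 := by
  have hφ1 : Differentiable ℝ φ := hφ.differentiable (by simp)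
  have hφd : ContDiff ℝ ((⊤:ℕ∞):WithTop ℕ∞) (deriv φ) := (contDiff_infty_iff_deriv.mp hφ).2
  have hφ2 : Differentiable ℝ (deriv φ) := hφd.differentiable (by simp)
  have hφdd : ContDiff ℝ ((⊤:ℕ∞):WithTop ℕ∞) (deriv (deriv φ)) :=
    (contDiff_infty_iff_deriv.mp hφd).2
  set F : ℝ → ℝ := fun x => (deriv φ x + d * φ x) * Real.exp (c * x) with hF
  set G : ℝ → ℝ := fun x =>
    (deriv (deriv φ) x + (c + d) * deriv φ x + c * d * φ x) * Real.exp (c * x) with hG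
  have hFd : ∀ x : ℝ, HasDerivAt F (G x) x := by
    intro x
    have h1 : HasDerivAt (fun x => deriv φ x + d * φ x)
        (deriv (deriv φ) x + d * deriv φ x) x :=
      ((hφ2 x).hasDerivAt).add (((hφ1 x).hasDerivAt).const_mul d)
    have h2 : HasDerivAt (fun x : ℝ => Real.exp (c * x)) (Real.exp (c * x) * c) x := by
      simpa using ((hasDerivAt_id x).const_mul c).exp
    have := h1.mul h2
    refine this.congr_deriv ?_
    simp only [hG]
    ring
  have hFsupp : HasCompactSupport F := by
    refine supp_comb φ hs fun x h0 h1 _ => ?_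
    simp [hF, h0, h1]
  have hGsupp : HasCompactSupport G := by
    refine supp_comb φ hs fun x h0 h1 h2 => ?_
    simp [hG, h0, h1, h2]
  have hGcont : Continuous G := by
    apply Continuous.mul
    · exact ((hφdd.continuous.add (continuous_const.mul hφd.continuous)).add
        (continuous_const.mul hφ1.continuous))
    · exact (continuous_const.mul continuous_id).rexp
  have hGint : IntegrableOn G (Iic 0) :=
    (hGcont.integrable_of_hasCompactSupport hGsupp).integrableOn
  have htend : Tendsto F atBot (𝓝 0) := by
    rw [hasCompactSupport_iff_eventuallyEq, Filter.coclosedCompact_eq_cocompact] at hFsupp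
    exact (hFsupp.filter_mono atBot_le_cocompact).tendsto
  have := integral_Iic_of_hasDerivAt_of_tendsto' (fun x _ => hFd x) hGint htend
  rw [this]
  simp [hF]

/-- Example 1.2, sharp-top stationary profile: for `a > 2`, `u(x) = e^{−λ₂|x|}/(2λ₁)` together
with `β = δ₀` is a stationary weak solution of `∂ₜu = u'' + (a·sgn(x) u)' + u − β`. -/
theorem stmt16 (a : ℝ) (ha : 2 < a)
    (r lam₁ lam₂ : ℝ) (hr : r = Real.sqrt (a ^ 2 - 4))
    (hlam₁ : lam₁ = (a - r) / 2) (hlam₂ : lam₂ = (a + r) / 2)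
    (u : ℝ → ℝ) (hu : ∀ x : ℝ, u x = Real.exp (-(lam₂ * |x|)) / (2 * lam₁)) :
    (∫ x : ℝ, u x) = 1 ∧
    u 0 = 1 / (2 * lam₁) ∧
    (∀ x : ℝ, x ≠ 0 → u x < u 0) ∧
    (∀ φ : ℝ → ℝ, ContDiff ℝ (⊤ : ℕ∞) φ → HasCompactSupport φ →
      ∫ x : ℝ, (deriv (deriv φ) x - a * Real.sign x * deriv φ x + φ x) * u x = φ 0) := by
  have ha0 : (0 : ℝ) < a := by linarith
  have ha4 : (0 : ℝ) < a ^ 2 - 4 := by nlinarith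
  have hr0 : 0 < r := by rw [hr]; exact Real.sqrt_pos.mpr ha4
  have hr2 : r ^ 2 = a ^ 2 - 4 := by rw [hr]; exact Real.sq_sqrt ha4.le
  have hra : r < a := by nlinarith
  have h1 : 0 < lam₁ := by rw [hlam₁]; linarith
  have h2 : 0 < lam₂ := by rw [hlam₂]; linarith
  have hmul : lam₁ * lam₂ = 1 := by rw [hlam₁, hlam₂]; nlinarith
  have hsum : lam₁ + lam₂ = a := by rw [hlam₁, hlam₂]; ring
  -- The integral of exp(-(lam₂ * x)) over (0, ∞)
  have hJ : ∫ x in Ioi (0 : ℝ), Real.exp (-(lam₂ * x)) = lam₂⁻¹ := by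
    have hderiv : ∀ x ∈ Ici (0 : ℝ),
        HasDerivAt (fun x : ℝ => -Real.exp (-(lam₂ * x)) / lam₂) (Real.exp (-(lam₂ * x))) x := by
      intro x _
      have h' : HasDerivAt (fun x : ℝ => Real.exp (-(lam₂ * x)))
          (Real.exp (-(lam₂ * x)) * -lam₂) x := by
        simpa using (((hasDerivAt_id x).const_mul lam₂).neg).exp
      have := (h'.neg).div_const lam₂
      refine this.congr_deriv ?_
      rw [mul_neg, neg_neg, mul_div_assoc, div_self h2.ne', mul_one]
    have hint : IntegrableOn (fun x : ℝ => Real.exp (-(lam₂ * x))) (Ioi 0) := by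
      have := exp_neg_integrableOn_Ioi 0 h2
      refine this.congr_fun (fun x _ => by ring_nf) measurableSet_Ioi
    have htend : Tendsto (fun x : ℝ => -Real.exp (-(lam₂ * x)) / lam₂) atTop (𝓝 0) := by
      have h3 : Tendsto (fun x : ℝ => -(lam₂ * x)) atTop atBot :=
        tendsto_neg_atBot_iff.mpr (Tendsto.const_mul_atTop h2 tendsto_id)
      have h4 : Tendsto (fun x : ℝ => Real.exp (-(lam₂ * x))) atTop (𝓝 0) :=
        Real.tendsto_exp_atBot.comp h3
      simpa using (h4.neg).div_const lam₂
    have := integral_Ioi_of_hasDerivAt_of_tendsto' hderiv hint htend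
    rw [this]
    simp
    rw [neg_div, neg_neg, one_div]
  refine ⟨?_, ?_, ?_, ?_⟩
  · -- total mass one
    have habs := integral_comp_abs (f := fun t => Real.exp (-(lam₂ * t)) / (2 * lam₁))
    simp only [hu]
    rw [habs, integral_div, hJ]
    field_simp
    nlinarith [hmul]
  · rw [hu]; simp
  · intro x hx
    rw [hu, hu]
    simp only [abs_zero, mul_zero, neg_zero, Real.exp_zero]
    have hax : 0 < |x| := abs_pos.mpr hx
    have hlt : Real.exp (-(lam₂ * |x|)) < 1 := by
      rw [Real.exp_lt_one_iff]
      nlinarith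
    exact (div_lt_div_iff_of_pos_right (by linarith : (0:ℝ) < 2 * lam₁)).mpr hlt
  · intro φ hφ hsupp
    have hφ' : ContDiff ℝ ((⊤:ℕ∞):WithTop ℕ∞) φ := hφ.of_le (by simp)
    have hφ1 : Differentiable ℝ φ := hφ'.differentiable (by simp)
    have hφd : ContDiff ℝ ((⊤:ℕ∞):WithTop ℕ∞) (deriv φ) := (contDiff_infty_iff_deriv.mp hφ').2
    have hφdd : ContDiff ℝ ((⊤:ℕ∞):WithTop ℕ∞) (deriv (deriv φ)) :=
      (contDiff_infty_iff_deriv.mp hφd).2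
    set W : ℝ → ℝ := fun x =>
      (deriv (deriv φ) x - a * Real.sign x * deriv φ x + φ x) * u x with hW
    set fp : ℝ → ℝ := fun x =>
      ((deriv (deriv φ) x - (lam₂ + lam₁) * deriv φ x + lam₂ * lam₁ * φ x) *
        Real.exp (-(lam₂ * x))) * (2 * lam₁)⁻¹ with hfp
    set fm : ℝ → ℝ := fun x =>
      ((deriv (deriv φ) x + (lam₂ + lam₁) * deriv φ x + lam₂ * lam₁ * φ x) *
        Real.exp (lam₂ * x)) * (2 * lam₁)⁻¹ with hfm
    have hfpcont : Continuous fp := by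
      apply Continuous.mul _ continuous_const
      exact ((hφdd.continuous.sub (continuous_const.mul hφd.continuous)).add
        (continuous_const.mul hφ1.continuous)).mul
        ((continuous_const.mul continuous_id).neg.rexp)
    have hfmcont : Continuous fm := by
      apply Continuous.mul _ continuous_const
      exact ((hφdd.continuous.add (continuous_const.mul hφd.continuous)).add
        (continuous_const.mul hφ1.continuous)).mul
        ((continuous_const.mul continuous_id).rexp)
    have hfpsupp : HasCompactSupport fp := by
      refine supp_comb φ hsupp fun x h0 h1 h2 => ?_
      simp [hfp, h0, h1, h2]
    have hfmsupp : HasCompactSupport fm := by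
      refine supp_comb φ hsupp fun x h0 h1 h2 => ?_
      simp [hfm, h0, h1, h2]
    have heqp : EqOn fp W (Ioi 0) := by
      intro x hx
      have hx0 : (0 : ℝ) < x := hx
      simp only [hW, hfp]
      rw [hu x, Real.sign_of_pos hx0, abs_of_pos hx0]
      linear_combination (-(deriv φ x) * Real.exp (-(lam₂ * x)) * (2 * lam₁)⁻¹) * hsum +
        (φ x * Real.exp (-(lam₂ * x)) * (2 * lam₁)⁻¹) * hmul
    have heqm : EqOn fm W (Iio 0) := by
      intro x hx
      have hx0 : x < (0 : ℝ) := hx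
      simp only [hW, hfm]
      rw [hu x, Real.sign_of_neg hx0, abs_of_neg hx0,
        show -(lam₂ * -x) = lam₂ * x from by ring]
      linear_combination ((deriv φ x) * Real.exp (lam₂ * x) * (2 * lam₁)⁻¹) * hsum +
        (φ x * Real.exp (lam₂ * x) * (2 * lam₁)⁻¹) * hmul
    have hWIoi : IntegrableOn W (Ioi 0) :=
      ((hfpcont.integrable_of_hasCompactSupport hfpsupp).integrableOn).congr_fun heqp
        measurableSet_Ioi
    have hWIic : IntegrableOn W (Iic 0) := by
      rw [integrableOn_Iic_iff_integrableOn_Iio]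
      exact ((hfmcont.integrable_of_hasCompactSupport hfmsupp).integrableOn).congr_fun heqm
        measurableSet_Iio
    have hsplit : (∫ x in Iic (0:ℝ), W x) + (∫ x in Ioi (0:ℝ), W x) = ∫ x : ℝ, W x :=
      intervalIntegral.integral_Iic_add_Ioi hWIic hWIoi
    have hIoi : (∫ x in Ioi (0:ℝ), W x) = (lam₁ * φ 0 - deriv φ 0) * (2 * lam₁)⁻¹ := by
      rw [← setIntegral_congr_fun measurableSet_Ioi heqp]
      simp only [hfp]
      rw [MeasureTheory.integral_mul_const, key_Ioi lam₂ lam₁ φ hφ' hsupp]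
    have hIic : (∫ x in Iic (0:ℝ), W x) = (deriv φ 0 + lam₁ * φ 0) * (2 * lam₁)⁻¹ := by
      rw [integral_Iic_eq_integral_Iio, ← setIntegral_congr_fun measurableSet_Iio heqm,
        ← integral_Iic_eq_integral_Iio]
      simp only [hfm]
      rw [MeasureTheory.integral_mul_const, key_Iic lam₂ lam₁ φ hφ' hsupp]
    rw [← hsplit, hIoi, hIic]
    field_simp
    ring
end
end

section
/- Example 1.2, critical case a = 2: Define u : ℝ → ℝ by u(x) = (1/4) e^{−|x|}(|x| + 1). Then ∫_ℝ u(x) dx = 1; u(x) < u(0) = 1/4 for every x ≠ 0; and for every φ ∈ C_c^∞(ℝ), ∫_ℝ (φ''(x) − 2·sgn(x)·φ'(x) + φ(x)) u(x) dx = φ(0). In other words, (u, δ₀) is a stationary weak solution of ∂_t u = u'' + (2·sgn(x) u)' + u − β with β_t = δ₀. -/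
open MeasureTheory Set Filter Topology

noncomputable section

private lemma hD_P (x : ℝ) :
    HasDerivAt (fun y : ℝ => -(1/4) * Real.exp (-y) * (y + 2))
      ((1/4) * Real.exp (-x) * (x + 1)) x := by
  have h := (((hasDerivAt_neg x).exp.const_mul (-(1/4) : ℝ)).mul
    ((hasDerivAt_id' x).add_const 2))
  exact h.congr_deriv (by ring)

private lemma hD_Q (x : ℝ) :
    HasDerivAt (fun y : ℝ => (1/4) * Real.exp y * (2 - y))
      ((1/4) * Real.exp x * (1 - x)) x := by
  have h := ((Real.hasDerivAt_exp x).const_mul ((1/4) : ℝ)).mul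
    ((hasDerivAt_id' x).const_sub 2)
  exact h.congr_deriv (by ring)

private lemma hD_p (x : ℝ) :
    HasDerivAt (fun y : ℝ => (1/4) * Real.exp (-y) * (y + 1))
      (-(1/4) * Real.exp (-x) * x) x := by
  have h := (((hasDerivAt_neg x).exp.const_mul ((1/4) : ℝ)).mul
    ((hasDerivAt_id' x).add_const 1))
  exact h.congr_deriv (by ring)

private lemma hD_p' (x : ℝ) :
    HasDerivAt (fun y : ℝ => -(1/4) * Real.exp (-y) * y)
      ((1/4) * Real.exp (-x) * (x - 1)) x := by
  have h := (((hasDerivAt_neg x).exp.const_mul (-(1/4) : ℝ)).mul (hasDerivAt_id' x))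
  exact h.congr_deriv (by ring)

private lemma hD_q (x : ℝ) :
    HasDerivAt (fun y : ℝ => (1/4) * Real.exp y * (1 - y))
      (-(1/4) * Real.exp x * x) x := by
  have h := ((Real.hasDerivAt_exp x).const_mul ((1/4) : ℝ)).mul
    ((hasDerivAt_id' x).const_sub 1)
  exact h.congr_deriv (by ring)

private lemma hD_q' (x : ℝ) :
    HasDerivAt (fun y : ℝ => -(1/4) * Real.exp y * y)
      (-(1/4) * Real.exp x * (x + 1)) x := by
  have h := ((Real.hasDerivAt_exp x).const_mul (-(1/4) : ℝ)).mul (hasDerivAt_id' x)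
  exact h.congr_deriv (by ring)

private lemma tendsto_P : Tendsto (fun y : ℝ => -(1/4) * Real.exp (-y) * (y + 2))
    atTop (𝓝 0) := by
  have h1 := Real.tendsto_pow_mul_exp_neg_atTop_nhds_zero 1
  have h2 := Real.tendsto_exp_neg_atTop_nhds_zero
  have h := (h1.const_mul (-(1/4) : ℝ)).add (h2.const_mul (-(1/2) : ℝ))
  simp only [mul_zero, add_zero] at h
  exact h.congr (fun x => by ring)

private lemma tendsto_pq : Tendsto (fun y : ℝ => (1/4) * Real.exp (-y) * (2 + y))
    atTop (𝓝 0) := by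
  have h1 := Real.tendsto_pow_mul_exp_neg_atTop_nhds_zero 1
  have h2 := Real.tendsto_exp_neg_atTop_nhds_zero
  have h := (h1.const_mul ((1/4) : ℝ)).add (h2.const_mul ((1/2) : ℝ))
  simp only [mul_zero, add_zero] at h
  exact h.congr (fun x => by ring)

private lemma tendsto_Q : Tendsto (fun y : ℝ => (1/4) * Real.exp y * (2 - y))
    atBot (𝓝 0) := by
  have h := tendsto_pq.comp tendsto_neg_atBot_atTop
  exact h.congr (fun x => by simp [Function.comp]; ring)

/-- Example 1.2, critical case `a = 2`: `u(x) = (1/4)e^{−|x|}(|x|+1)` together with `β = δ₀`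
is a stationary weak solution of `∂ₜu = u'' + (2·sgn(x) u)' + u − β`. -/
theorem stmt17 (u : ℝ → ℝ)
    (hu : ∀ x : ℝ, u x = (1 / 4) * Real.exp (-|x|) * (|x| + 1)) :
    (∫ x : ℝ, u x) = 1 ∧
    u 0 = 1 / 4 ∧
    (∀ x : ℝ, x ≠ 0 → u x < u 0) ∧
    (∀ φ : ℝ → ℝ, ContDiff ℝ (⊤ : ℕ∞) φ → HasCompactSupport φ →
      ∫ x : ℝ, (deriv (deriv φ) x - 2 * Real.sign x * deriv φ x + φ x) * u x = φ 0) := by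
  have hu0 : u 0 = 1 / 4 := by rw [hu]; simp
  -- right-side integrability and value for u
  have hpnn : ∀ x ∈ Ioi (0:ℝ), 0 ≤ (1/4) * Real.exp (-x) * (x + 1) := by
    intro x hx
    have := (Real.exp_pos (-x)).le
    have : (0:ℝ) < x := hx
    positivity
  have hIp : IntegrableOn (fun y : ℝ => (1/4) * Real.exp (-y) * (y + 1)) (Ioi 0) :=
    integrableOn_Ioi_deriv_of_nonneg' (fun x _ => hD_P x) hpnn tendsto_P
  have eqR : EqOn (fun y : ℝ => (1/4) * Real.exp (-y) * (y + 1)) u (Ioi 0) := by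
    intro x hx
    rw [hu x, abs_of_pos hx]
  have hIuR : IntegrableOn u (Ioi 0) := hIp.congr_fun eqR measurableSet_Ioi
  have vR : ∫ x in Ioi (0:ℝ), u x = 1/2 := by
    rw [← setIntegral_congr_fun measurableSet_Ioi eqR,
      integral_Ioi_of_hasDerivAt_of_nonneg' (fun x _ => hD_P x) hpnn tendsto_P]
    norm_num
  -- left-side integrability for the explicit function q
  have hIq' : IntegrableOn (fun y : ℝ => (1/4) * Real.exp y * (1 - y)) (Iio 0) := by
    have h := (MeasurePreserving.integrableOn_comp_preimage
      (Measure.measurePreserving_neg (volume : Measure ℝ))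
      (Homeomorph.neg ℝ).measurableEmbedding).2 hIp
    have hset : (Neg.neg ⁻¹' (Ioi (0:ℝ))) = Iio 0 := by
      ext y; simp
    rw [hset] at h
    exact h.congr_fun (fun x _ => by simp [Function.comp]; ring) measurableSet_Iio
  have hIq : IntegrableOn (fun y : ℝ => (1/4) * Real.exp y * (1 - y)) (Iic 0) :=
    (integrableOn_Iic_iff_integrableOn_Iio enorm_ne_top).2 hIq'
  have eqLu : EqOn (fun y : ℝ => (1/4) * Real.exp y * (1 - y)) u (Iic 0) := by
    intro x hx
    rw [hu x, abs_of_nonpos hx, neg_neg]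
    ring
  have hIuL : IntegrableOn u (Iic 0) := hIq.congr_fun eqLu measurableSet_Iic
  have vL : ∫ x in Iic (0:ℝ), u x = 1/2 := by
    rw [← setIntegral_congr_fun measurableSet_Iic eqLu,
      integral_Iic_of_hasDerivAt_of_tendsto' (fun x _ => hD_Q x) hIq tendsto_Q]
    norm_num
  refine ⟨?_, hu0, ?_, ?_⟩
  · rw [← intervalIntegral.integral_Iic_add_Ioi hIuL hIuR, vL, vR]; norm_num
  · intro x hx
    rw [hu x, hu0]
    have h1 : |x| + 1 < Real.exp |x| := by
      have := Real.add_one_lt_exp (abs_ne_zero.mpr hx)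
      linarith
    have h2 : Real.exp (-|x|) * Real.exp |x| = 1 := by
      rw [← Real.exp_add]; simp
    have h3 := Real.exp_pos (-|x|)
    nlinarith
  · intro φ hφ hφc
    have hsm : ContDiff ℝ ((⊤:ℕ∞) : WithTop ℕ∞) φ := hφ.of_le (by simp)
    have hφ' : ContDiff ℝ ((⊤:ℕ∞) : WithTop ℕ∞) (deriv φ) := (contDiff_infty_iff_deriv.1 hsm).2
    have hφ'' : ContDiff ℝ ((⊤:ℕ∞) : WithTop ℕ∞) (deriv (deriv φ)) := (contDiff_infty_iff_deriv.1 hφ').2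
    have hd1 : ∀ x, HasDerivAt φ (deriv φ x) x :=
      fun x => ((contDiff_infty_iff_deriv.1 hsm).1 x).hasDerivAt
    have hd2 : ∀ x, HasDerivAt (deriv φ) (deriv (deriv φ) x) x :=
      fun x => ((contDiff_infty_iff_deriv.1 hφ').1 x).hasDerivAt
    have hs1 : HasCompactSupport (deriv φ) := hφc.deriv
    have hs2 : HasCompactSupport (deriv (deriv φ)) := hs1.deriv
    -- eventually zero facts
    have hev : ∀ {f : ℝ → ℝ}, HasCompactSupport f → (∀ᶠ x in atTop, f x = 0) := by
      intro f hf
      rw [hasCompactSupport_iff_eventuallyEq, Filter.coclosedCompact_eq_cocompact] at hf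
      exact hf.filter_mono atTop_le_cocompact
    have hev' : ∀ {f : ℝ → ℝ}, HasCompactSupport f → (∀ᶠ x in atBot, f x = 0) := by
      intro f hf
      rw [hasCompactSupport_iff_eventuallyEq, Filter.coclosedCompact_eq_cocompact] at hf
      exact hf.filter_mono atBot_le_cocompact
    -- explicit half-line integrands
    set gR : ℝ → ℝ := fun x =>
      (deriv (deriv φ) x - 2 * deriv φ x + φ x) * ((1/4) * Real.exp (-x) * (x + 1)) with hgR
    set gL : ℝ → ℝ := fun x =>
      (deriv (deriv φ) x + 2 * deriv φ x + φ x) * ((1/4) * Real.exp x * (1 - x)) with hgL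
    have hK : IsCompact (tsupport φ ∪ tsupport (deriv φ) ∪ tsupport (deriv (deriv φ))) :=
      (hφc.union hs1).union hs2
    have hzero : ∀ x ∉ tsupport φ ∪ tsupport (deriv φ) ∪ tsupport (deriv (deriv φ)),
        φ x = 0 ∧ deriv φ x = 0 ∧ deriv (deriv φ) x = 0 := by
      intro x hx
      simp only [mem_union, not_or] at hx
      exact ⟨image_eq_zero_of_notMem_tsupport hx.1.1, image_eq_zero_of_notMem_tsupport hx.1.2,
        image_eq_zero_of_notMem_tsupport hx.2⟩
    have hgRs : HasCompactSupport gR := by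
      apply HasCompactSupport.intro hK
      intro x hx
      obtain ⟨h0, h1, h2⟩ := hzero x hx
      simp [hgR, h0, h1, h2]
    have hgLs : HasCompactSupport gL := by
      apply HasCompactSupport.intro hK
      intro x hx
      obtain ⟨h0, h1, h2⟩ := hzero x hx
      simp [hgL, h0, h1, h2]
    have hgRc : Continuous gR := by
      apply ((hφ''.continuous.sub (continuous_const.mul hφ'.continuous)).add hφ.continuous).mul
      exact (continuous_const.mul (Real.continuous_exp.comp continuous_neg)).mul
        (continuous_id.add continuous_const)
    have hgLc : Continuous gL := by
      apply ((hφ''.continuous.add (continuous_const.mul hφ'.continuous)).add hφ.continuous).mul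
      exact (continuous_const.mul Real.continuous_exp).mul
        (continuous_const.sub continuous_id)
    have hiR : IntegrableOn gR (Ioi 0) :=
      (hgRc.integrable_of_hasCompactSupport hgRs).integrableOn
    have hiL : IntegrableOn gL (Iic 0) :=
      (hgLc.integrable_of_hasCompactSupport hgLs).integrableOn
    -- boundary potentials
    set W : ℝ → ℝ := fun x =>
      deriv φ x * ((1/4) * Real.exp (-x) * (x + 1)) - φ x * (-(1/4) * Real.exp (-x) * x)
        - 2 * (φ x * ((1/4) * Real.exp (-x) * (x + 1))) with hW
    set V : ℝ → ℝ := fun x =>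
      deriv φ x * ((1/4) * Real.exp x * (1 - x)) - φ x * (-(1/4) * Real.exp x * x)
        + 2 * (φ x * ((1/4) * Real.exp x * (1 - x))) with hV
    have hWd : ∀ x ∈ Ici (0:ℝ), HasDerivAt W (gR x) x := by
      intro x _
      have h := (((hd2 x).mul (hD_p x)).sub ((hd1 x).mul (hD_p' x))).sub
        (((hd1 x).mul (hD_p x)).const_mul 2)
      exact h.congr_deriv (by simp only [hgR]; ring)
    have hVd : ∀ x ∈ Iic (0:ℝ), HasDerivAt V (gL x) x := by
      intro x _
      have h := (((hd2 x).mul (hD_q x)).sub ((hd1 x).mul (hD_q' x))).add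
        (((hd1 x).mul (hD_q x)).const_mul 2)
      exact h.congr_deriv (by simp only [hgL]; ring)
    have hWt : Tendsto W atTop (𝓝 0) := by
      apply Tendsto.congr' _ (tendsto_const_nhds : Tendsto (fun _ : ℝ => (0:ℝ)) atTop (𝓝 0))
      filter_upwards [hev hφc, hev hs1] with x h0 h1
      simp [hW, h0, h1]
    have hVt : Tendsto V atBot (𝓝 0) := by
      apply Tendsto.congr' _ (tendsto_const_nhds : Tendsto (fun _ : ℝ => (0:ℝ)) atBot (𝓝 0))
      filter_upwards [hev' hφc, hev' hs1] with x h0 h1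
      simp [hV, h0, h1]
    have IR : ∫ x in Ioi (0:ℝ), gR x = φ 0 / 2 - deriv φ 0 / 4 := by
      rw [integral_Ioi_of_hasDerivAt_of_tendsto' hWd hiR hWt]
      simp [hW, Real.exp_zero]
      ring
    have IL : ∫ x in Iic (0:ℝ), gL x = deriv φ 0 / 4 + φ 0 / 2 := by
      rw [integral_Iic_of_hasDerivAt_of_tendsto' hVd hiL hVt]
      simp [hV, Real.exp_zero]
      ring
    -- relate to the full integrand
    set F : ℝ → ℝ := fun x =>
      (deriv (deriv φ) x - 2 * Real.sign x * deriv φ x + φ x) * u x with hF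
    have eqFR : EqOn gR F (Ioi 0) := by
      intro x hx
      simp only [hgR, hF]
      rw [hu x, abs_of_pos hx, Real.sign_of_pos hx]
      ring
    have eqFL : EqOn gL F (Iio 0) := by
      intro x hx
      simp only [hgL, hF]
      rw [hu x, abs_of_neg hx, neg_neg, Real.sign_of_neg hx]
      ring
    have hFiR : IntegrableOn F (Ioi 0) := hiR.congr_fun eqFR measurableSet_Ioi
    have hFiL : IntegrableOn F (Iic 0) := by
      refine (integrableOn_Iic_iff_integrableOn_Iio enorm_ne_top).2 ?_
      exact (hiL.mono_set Iio_subset_Iic_self).congr_fun eqFL measurableSet_Iio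
    have split : (∫ x : ℝ, F x) = (∫ x in Iic (0:ℝ), F x) + ∫ x in Ioi (0:ℝ), F x :=
      (intervalIntegral.integral_Iic_add_Ioi hFiL hFiR).symm
    have hL2 : (∫ x in Iic (0:ℝ), F x) = deriv φ 0 / 4 + φ 0 / 2 := by
      rw [integral_Iic_eq_integral_Iio, ← setIntegral_congr_fun measurableSet_Iio eqFL,
        ← integral_Iic_eq_integral_Iio, IL]
    have hR2 : (∫ x in Ioi (0:ℝ), F x) = φ 0 / 2 - deriv φ 0 / 4 := by
      rw [← setIntegral_congr_fun measurableSet_Ioi eqFR, IR]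
    calc (∫ x : ℝ, F x) = (deriv φ 0 / 4 + φ 0 / 2) + (φ 0 / 2 - deriv φ 0 / 4) := by
          rw [split, hL2, hR2]
      _ = φ 0 := by ring
end
end
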